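/- Let I be a proper ideal of R = C^∞(M,ℝ) of finite codimension and let y₁, …, y_n be the (distinct) points of spec(I). Setting I_i = I + 𝔫_{y_i}, the ideals I_i are in general position: for every i, I_i + (I₁ ∩ ⋯ ∩ Î_i ∩ ⋯ ∩ I_n) = R, where the hat denotes omission of the i-th factor. -/

import Mathlib

open scoped Manifold
open Module Filter Topology

noncomputable section

/-- The ℝ-algebra of smooth real-valued functions on a manifold `M` modelled on `ℝ^m`. -/
abbrev SmoothFns (m : ℕ) (M : Type*) [TopologicalSpace M]
    [ChartedSpace (EuclideanSpace ℝ (Fin m)) M] : Type _ :=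
  C^(⊤ : ℕ∞)⟮𝓡 m, M; 𝓘(ℝ, ℝ), ℝ⟯

variable {m : ℕ} {M : Type*} [TopologicalSpace M] [T2Space M] [SecondCountableTopology M]
  [ChartedSpace (EuclideanSpace ℝ (Fin m)) M] [IsManifold (𝓡 m) (⊤ : ℕ∞) M]

/-- The ideal `𝔪ₓ` of smooth functions vanishing at the point `x`. -/
def mIdeal (x : M) : Ideal (SmoothFns m M) where
  carrier := {f | f x = 0}
  add_mem' := by intro f g hf hg; simp_all
  zero_mem' := by simp
  smul_mem' := by intro c f hf; simp_all

/-- The ideal `𝔫ₓ` of smooth functions vanishing on some neighbourhood of the point `x`. -/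
def nIdeal (x : M) : Ideal (SmoothFns m M) where
  carrier := {f | ∀ᶠ y in 𝓝 x, f y = 0}
  add_mem' := by
    intro f g hf hg
    filter_upwards [hf, hg] with y h1 h2
    simp [h1, h2]
  zero_mem' := by filter_upwards with y; simp
  smul_mem' := by
    intro c f hf
    filter_upwards [hf] with y h
    simp [h]

/-- The spectrum of an ideal: the set of common zeros of its elements. -/
def idealSpec (I : Ideal (SmoothFns m M)) : Set M :=
  {x : M | ∀ f ∈ I, f x = 0}

/-- A smooth bump function at `x` supported off `C` is `≡ 1` near `x` and `≡ 0` near `C`, so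
`1 = (1 - g) + g` splits across the two ideals. -/
theorem nIdeal_sup_iInf_nIdeal_eq_top {M : Type*} [TopologicalSpace M] [T2Space M]
    [ChartedSpace (EuclideanSpace ℝ (Fin m)) M] [IsManifold (𝓡 m) (⊤ : ℕ∞) M]
    {x : M} {C : Set M} (hC : IsClosed C) (hx : x ∉ C) :
    (nIdeal x ⊔ ⨅ z ∈ C, nIdeal z : Ideal (SmoothFns m M)) = ⊤ := by
  obtain ⟨f, -, hsupp⟩ := (SmoothBumpFunction.nhds_basis_tsupport (I := 𝓡 m) x).mem_iff.mp
    (hC.isOpen_compl.mem_nhds hx)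
  let g : SmoothFns m M := ⟨f, f.contMDiff⟩
  have one_sub_mem : 1 - g ∈ nIdeal x := by
    filter_upwards [f.eventuallyEq_one] with z hz
    show (1 : ℝ) - f z = 0
    rw [hz, Pi.one_apply, sub_self]
  have mem_iInf : g ∈ ⨅ z ∈ C, nIdeal z := by
    simp only [Submodule.mem_iInf]
    intro z hz
    filter_upwards [(isClosed_tsupport f).isOpen_compl.mem_nhds fun h ↦ hsupp h hz] with w hw
    exact image_eq_zero_of_notMem_tsupport hw
  rw [Ideal.eq_top_iff_one, ← sub_add_cancel 1 g]
  exact Submodule.add_mem_sup one_sub_mem mem_iInf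

theorem primary_components_in_general_position
    (I : Ideal (SmoothFns m M))
    (n : ℕ) (y : Fin n → M) (hy : Function.Injective y) :
    ∀ i : Fin n, (I + nIdeal (y i)) ⊔ (⨅ j ≠ i, (I + nIdeal (y j))) = ⊤ := by
  intro i
  have others_closed : IsClosed (y '' {j | j ≠ i}) := ((Set.toFinite _).image y).isClosed
  have not_mem_others : y i ∉ y '' {j | j ≠ i} := fun ⟨_, hj, hji⟩ ↦ hj (hy hji)
  refine eq_top_mono (sup_le_sup le_sup_right ?_)
    (nIdeal_sup_iInf_nIdeal_eq_top others_closed not_mem_others)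
  exact le_iInf₂ fun j hj ↦ (iInf₂_le (y j) ⟨j, hj, rfl⟩).trans le_sup_right
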